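/- arXiv:1306.0207 — 7 statements merged into one kernel-verified Lean document; each statement's English description precedes it below -/
import Mathlib

section
/- Let P ⊆ ℤ × ℤ be a finite set whose points have pairwise distinct y-coordinates, and let ℓ : ℤ. List the points of P as p_1, …, p_N in increasing order of y-coordinate, and let k be the number of indices j < N such that exactly one of p_j, p_{j+1} has x-coordinate ≤ ℓ (the number of alternations of P across the vertical line between ℓ and ℓ+1). Then each such alternating consecutive pair {p_j, p_{j+1}} is an unsatisfied rectangle of P, and there exists an independent family of unsatisfied rectangles of P of cardinality at least ⌊k/2⌋. (This shows the one-line alternation bound is dominated by the independent rectangle bound.) -/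
open scoped Classical

/-- `c` lies in the closed rectangle spanned by `a` and `b`. -/
def InRect (a b c : ℤ × ℤ) : Prop :=
  min a.1 b.1 ≤ c.1 ∧ c.1 ≤ max a.1 b.1 ∧ min a.2 b.2 ≤ c.2 ∧ c.2 ≤ max a.2 b.2

/-- The pair `a, b` is arborally satisfied in `P`. -/
def PairSat (P : Set (ℤ × ℤ)) (a b : ℤ × ℤ) : Prop :=
  ∃ c ∈ P, c ≠ a ∧ c ≠ b ∧ InRect a b c

/-- `{a, b}` is an unsatisfied rectangle of `P`. -/
def UnsatRect (P : Finset (ℤ × ℤ)) (a b : ℤ × ℤ) : Prop :=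
  a ∈ P ∧ b ∈ P ∧ a.1 ≠ b.1 ∧ a.2 ≠ b.2 ∧ ¬ PairSat (↑P : Set (ℤ × ℤ)) a b

/-- A rectangle is an (unordered) pair of points, represented as an ordered pair
normalized so that the first point has the smaller `y`-coordinate.
`UnsatFamily P R` says every member of `R` is an unsatisfied rectangle of `P`. -/
def UnsatFamily (P : Finset (ℤ × ℤ)) (R : Finset ((ℤ × ℤ) × (ℤ × ℤ))) : Prop :=
  ∀ r ∈ R, r.1 ∈ P ∧ r.2 ∈ P ∧ r.1.2 < r.2.2 ∧ r.1.1 ≠ r.2.1 ∧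
    ¬ PairSat (↑P : Set (ℤ × ℤ)) r.1 r.2

/-- `p` is a corner of the rectangle `r`. -/
def RectCorner (r : (ℤ × ℤ) × (ℤ × ℤ)) (p : ℤ × ℤ) : Prop :=
  (p.1 = r.1.1 ∨ p.1 = r.2.1) ∧ (p.2 = r.1.2 ∨ p.2 = r.2.2)

/-- `p` lies strictly inside the rectangle `r`. -/
def StrictInside (r : (ℤ × ℤ) × (ℤ × ℤ)) (p : ℤ × ℤ) : Prop :=
  min r.1.1 r.2.1 < p.1 ∧ p.1 < max r.1.1 r.2.1 ∧
  min r.1.2 r.2.2 < p.2 ∧ p.2 < max r.1.2 r.2.2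

/-- A family of rectangles is independent if no corner of one member lies
strictly inside another member. -/
def IndepFamily (R : Finset ((ℤ × ℤ) × (ℤ × ℤ))) : Prop :=
  ∀ r ∈ R, ∀ s ∈ R, r ≠ s → ∀ p : ℤ × ℤ, RectCorner r p → ¬ StrictInside s p

/-- One-line alternation bound is dominated by the independent rectangle bound:
if `P` has pairwise distinct `y`-coordinates, is enumerated by `p` in
increasing order of `y`-coordinate, and `k` is the number of alternations of `P`
across the vertical line between `ℓ` and `ℓ+1`, then each alternating
consecutive pair is an unsatisfied rectangle of `P`, and `P` has an independent
family of unsatisfied rectangles of cardinality at least `⌊k/2⌋`. -/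
theorem alternation_le_independent_rectangles
    (P : Finset (ℤ × ℤ))
    (hy : ∀ p ∈ P, ∀ q ∈ P, p.2 = q.2 → p = q)
    (ℓ : ℤ) (N : ℕ) (hN : N = P.card)
    (p : Fin N → ℤ × ℤ)
    (hmem : ∀ j, p j ∈ P)
    (hsurj : ∀ q ∈ P, ∃ j, p j = q)
    (hmono : StrictMono fun j => (p j).2)
    (k : ℕ)
    (hk : k = (Finset.univ.filter (fun j : Fin N =>
        ∃ h : (j : ℕ) + 1 < N,
          ((p j).1 ≤ ℓ) ≠ ((p ⟨(j : ℕ) + 1, h⟩).1 ≤ ℓ))).card) :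
    (∀ (j : Fin N) (h : (j : ℕ) + 1 < N),
        ((p j).1 ≤ ℓ) ≠ ((p ⟨(j : ℕ) + 1, h⟩).1 ≤ ℓ) →
        UnsatRect P (p j) (p ⟨(j : ℕ) + 1, h⟩)) ∧
    ∃ R : Finset ((ℤ × ℤ) × (ℤ × ℤ)),
      UnsatFamily P R ∧ IndepFamily R ∧ k / 2 ≤ R.card := by
  classical
  have horder : ∀ {a b : Fin N}, (p a).2 < (p b).2 ↔ a < b := fun {a b} => hmono.lt_iff_lt
  have hylt : ∀ (j : Fin N) (h : (j:ℕ)+1 < N), (p j).2 < (p ⟨(j:ℕ)+1,h⟩).2 := by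
    intro j h
    exact hmono (show j < ⟨(j:ℕ)+1,h⟩ by simp [Fin.lt_def])
  have consec : ∀ (j : Fin N) (h : (j:ℕ)+1 < N) (c : ℤ×ℤ), c ∈ P →
      ¬ ((p j).2 < c.2 ∧ c.2 < (p ⟨(j:ℕ)+1, h⟩).2) := by
    rintro j h c hc ⟨h1, h2⟩
    obtain ⟨m, rfl⟩ := hsurj c hc
    have hm1 : j < m := horder.mp h1
    have hm2 : m < ⟨(j:ℕ)+1, h⟩ := horder.mp h2
    simp only [Fin.lt_def] at hm1 hm2
    omega
  have main : ∀ (j : Fin N) (h : (j:ℕ)+1 < N),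
      ((p j).1 ≤ ℓ) ≠ ((p ⟨(j:ℕ)+1, h⟩).1 ≤ ℓ) →
      UnsatRect P (p j) (p ⟨(j:ℕ)+1, h⟩) := by
    intro j h halt
    refine ⟨hmem j, hmem _, ?_, (hylt j h).ne, ?_⟩
    · intro hx; exact halt (by rw [hx])
    · rintro ⟨c, hc, hc1, hc2, ⟨_, _, hlo, hhi⟩⟩
      have hc' : c ∈ P := hc
      have hlt := hylt j h
      rw [min_eq_left hlt.le] at hlo
      rw [max_eq_right hlt.le] at hhi
      have h1 : (p j).2 < c.2 :=
        lt_of_le_of_ne hlo (fun e => hc1 (hy c hc' _ (hmem j) e.symm))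
      have h2 : c.2 < (p ⟨(j:ℕ)+1,h⟩).2 :=
        lt_of_le_of_ne hhi (fun e => hc2 (hy c hc' _ (hmem _) e))
      exact consec j h c hc' ⟨h1, h2⟩
  refine ⟨main, ?_⟩
  set S := Finset.univ.filter (fun j : Fin N =>
      ∃ h : (j:ℕ)+1 < N, ((p j).1 ≤ ℓ) ≠ ((p ⟨(j:ℕ)+1,h⟩).1 ≤ ℓ)) with hS
  set f : Fin N → (ℤ×ℤ)×(ℤ×ℤ) :=
      fun j => (p j, if h : (j:ℕ)+1 < N then p ⟨(j:ℕ)+1,h⟩ else p j) with hf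
  have hfS : ∀ j ∈ S, ∃ h : (j:ℕ)+1 < N,
      f j = (p j, p ⟨(j:ℕ)+1,h⟩) ∧ ((p j).1 ≤ ℓ) ≠ ((p ⟨(j:ℕ)+1,h⟩).1 ≤ ℓ) := by
    intro j hj
    rw [hS, Finset.mem_filter] at hj
    obtain ⟨-, h, halt⟩ := hj
    exact ⟨h, by simp [hf, dif_pos h], halt⟩
  refine ⟨S.image f, ?_, ?_, ?_⟩
  · intro r hr
    obtain ⟨j, hj, rfl⟩ := Finset.mem_image.mp hr
    obtain ⟨h, hfj, halt⟩ := hfS j hj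
    obtain ⟨m1, m2, hx, hy2, hns⟩ := main j h halt
    rw [hfj]
    exact ⟨m1, m2, hylt j h, hx, hns⟩
  · intro r hr s hs hrs q hq hstrict
    obtain ⟨j, hj, rfl⟩ := Finset.mem_image.mp hr
    obtain ⟨i, hi, rfl⟩ := Finset.mem_image.mp hs
    obtain ⟨hj1, hfj, -⟩ := hfS j hj
    obtain ⟨hi1, hfi, -⟩ := hfS i hi
    rw [hfj] at hq
    rw [hfi] at hstrict
    obtain ⟨-, -, hlo, hhi⟩ := hstrict
    have hlt := hylt i hi1
    rw [min_eq_left hlt.le] at hlo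
    rw [max_eq_right hlt.le] at hhi
    rcases hq.2 with e | e <;> rw [e] at hlo hhi
    · exact consec i hi1 (p j) (hmem j) ⟨hlo, hhi⟩
    · exact consec i hi1 (p ⟨(j:ℕ)+1, hj1⟩) (hmem _) ⟨hlo, hhi⟩
  · have hinj : Function.Injective f := by
      intro a b hab
      have : p a = p b := congrArg Prod.fst hab
      exact hmono.injective (congrArg Prod.snd this)
    rw [Finset.card_image_of_injective _ hinj, ← hk]
    exact Nat.div_le_self k 2
end

section
/- There exists a universal constant c > 0 such that for every finite set P ⊆ ℤ × ℤ whose points have pairwise distinct y-coordinates, the sum over all points p ∈ P of the funnel alternation count of p is at most c times the maximum cardinality of an independent family of unsatisfied rectangles of P. (This shows the funnel bound is asymptotically dominated by the independent rectangle bound.) -/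
open scoped Classical

/-- Maximum cardinality of an independent family of unsatisfied rectangles
of `P` (the independent rectangle bound `IRB(P)`). -/
noncomputable def IRB (P : Finset (ℤ × ℤ)) : ℕ :=
  sSup {k : ℕ | ∃ R : Finset ((ℤ × ℤ) × (ℤ × ℤ)),
    UnsatFamily P R ∧ IndepFamily R ∧ R.card = k}

/-- The funnel of `p` in `P`: points of `P` strictly below `p` forming an
unsatisfied rectangle with `p`. -/
noncomputable def funnel (P : Finset (ℤ × ℤ)) (p : ℤ × ℤ) : Finset (ℤ × ℤ) :=
  P.filter (fun q => q.2 < p.2 ∧ p.1 ≠ q.1 ∧ ¬ PairSat (↑P : Set (ℤ × ℤ)) p q)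

/-- The funnel alternation count of `p` in `P`: listing the funnel points in
decreasing order of `y`-coordinate, the number of consecutive pairs lying on
opposite sides of the vertical line through `p`. A pair `(q, q')` is
consecutive in this order iff `q'.2 < q.2` and no funnel point has
`y`-coordinate strictly between them. -/
noncomputable def funnelAlt (P : Finset (ℤ × ℤ)) (p : ℤ × ℤ) : ℕ :=
  (((funnel P p) ×ˢ (funnel P p)).filter (fun qq =>
      qq.2.2 < qq.1.2 ∧
      (∀ r ∈ funnel P p, ¬ (qq.2.2 < r.2 ∧ r.2 < qq.1.2)) ∧
      ((qq.1.1 < p.1) ≠ (qq.2.1 < p.1)))).card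

section FunnelProofAux

lemma ne_of_snd_ne {u v : ℤ × ℤ} (h : u.2 ≠ v.2) : u ≠ v :=
  fun he => h (congrArg Prod.snd he)

lemma no_wit {P : Finset (ℤ × ℤ)} {x y : ℤ × ℤ} (h : ¬ PairSat (↑P : Set (ℤ × ℤ)) x y)
    {c : ℤ × ℤ} (hc : c ∈ P) (h1 : c ≠ x) (h2 : c ≠ y)
    (g1 : min x.1 y.1 ≤ c.1) (g2 : c.1 ≤ max x.1 y.1)
    (g3 : min x.2 y.2 ≤ c.2) (g4 : c.2 ≤ max x.2 y.2) : False :=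
  h ⟨c, Finset.mem_coe.2 hc, h1, h2, g1, g2, g3, g4⟩

lemma pairSat_symm {S : Set (ℤ × ℤ)} {x y : ℤ × ℤ} (h : PairSat S x y) : PairSat S y x := by
  obtain ⟨c, hc, h1, h2, r1, r2, r3, r4⟩ := h
  exact ⟨c, hc, h2, h1, by omega, by omega, by omega, by omega⟩

lemma mem_funnel {P : Finset (ℤ × ℤ)} {p q : ℤ × ℤ} :
    q ∈ funnel P p ↔ q ∈ P ∧ q.2 < p.2 ∧ p.1 ≠ q.1 ∧ ¬ PairSat (↑P : Set (ℤ × ℤ)) p q := by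
  simp [funnel, Finset.mem_filter, and_assoc]

lemma indep_key (P : Finset (ℤ × ℤ))
    (hY : ∀ p ∈ P, ∀ q ∈ P, p.2 = q.2 → p = q)
    {a p a2 b p' b2 : ℤ × ℤ}
    (hp : p ∈ P) (hp' : p' ∈ P)
    (ha : a ∈ funnel P p) (ha2 : a2 ∈ funnel P p) (haa2 : a2.2 < a.2)
    (hacons : ∀ t ∈ funnel P p, ¬(a2.2 < t.2 ∧ t.2 < a.2))
    (haside : (a.1 < p.1) ≠ (a2.1 < p.1))
    (hb : b ∈ funnel P p') (hb2 : b2 ∈ funnel P p') (hbb2 : b2.2 < b.2)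
    (hbcons : ∀ t ∈ funnel P p', ¬(b2.2 < t.2 ∧ t.2 < b.2))
    (hbside : (b.1 < p'.1) ≠ (b2.1 < p'.1))
    {g : ℤ × ℤ} (hg : RectCorner (a, p) g) :
    ¬ StrictInside (b, p') g := by
  obtain ⟨haP, hay, hax, hNa⟩ := mem_funnel.1 ha
  obtain ⟨ha2P, ha2y, ha2x, hNa2⟩ := mem_funnel.1 ha2
  obtain ⟨hbP, hby, hbx, hNb⟩ := mem_funnel.1 hb
  obtain ⟨hb2P, hb2y, hb2x, hNb2⟩ := mem_funnel.1 hb2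
  intro hsI
  obtain ⟨hs1, hs2, hs3, hs4⟩ := hsI
  obtain ⟨hg1, hg2⟩ := hg
  dsimp only at hs1 hs2 hs3 hs4 hg1 hg2
  have hsd : (a.1 < p.1 ∧ p.1 < a2.1) ∨ (a2.1 < p.1 ∧ p.1 < a.1) := by
    by_cases h : a.1 < p.1
    · by_cases h2 : a2.1 < p.1
      · exact absurd (eq_iff_iff.2 ⟨fun _ => h2, fun _ => h⟩) haside
      · exact Or.inl ⟨h, by omega⟩
    · by_cases h2 : a2.1 < p.1
      · exact Or.inr ⟨h2, by omega⟩
      · exact absurd (eq_iff_iff.2 ⟨fun hh => absurd hh h, fun hh => absurd hh h2⟩) haside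
  have hsb : (b.1 < p'.1 ∧ p'.1 < b2.1) ∨ (b2.1 < p'.1 ∧ p'.1 < b.1) := by
    by_cases h : b.1 < p'.1
    · by_cases h2 : b2.1 < p'.1
      · exact absurd (eq_iff_iff.2 ⟨fun _ => h2, fun _ => h⟩) hbside
      · exact Or.inl ⟨h, by omega⟩
    · by_cases h2 : b2.1 < p'.1
      · exact Or.inr ⟨h2, by omega⟩
      · exact absurd (eq_iff_iff.2 ⟨fun hh => absurd hh h, fun hh => absurd hh h2⟩) hbside
  rcases hg1 with hA | hP <;> rcases hg2 with hA2 | hP2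
  · -- corner is a itself
    rw [hA] at hs1 hs2
    rw [hA2] at hs3 hs4
    exact no_wit hNb haP (ne_of_snd_ne (by omega)) (ne_of_snd_ne (by omega))
      (by omega) (by omega) (by omega) (by omega)
  · -- corner (a.1, p.2)
    rw [hA] at hs1 hs2
    rw [hP2] at hs3 hs4
    have hax' : a.1 ≠ b.1 := by omega
    have hab : a.2 < b.2 := by
      by_contra hc
      push_neg at hc
      have h2 : a.2 ≠ b.2 := fun h => hax' (congrArg Prod.fst (hY a haP b hbP h))
      exact no_wit hNb haP (ne_of_snd_ne (by omega)) (ne_of_snd_ne h2)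
        (by omega) (by omega) (by omega) (by omega)
    have hpout : p.1 < min b.1 p'.1 ∨ max b.1 p'.1 < p.1 := by
      by_contra hc
      push_neg at hc
      exact no_wit hNb hp (ne_of_snd_ne (by omega)) (ne_of_snd_ne (by omega))
        (by omega) (by omega) (by omega) (by omega)
    by_cases hbbet : min p.1 a.1 ≤ b.1 ∧ b.1 ≤ max p.1 a.1
    · exact no_wit hNa hbP (ne_of_snd_ne (by omega)) (ne_of_snd_ne (by omega))
        (by omega) (by omega) (by omega) (by omega)
    · have hp'bet : min p.1 a.1 ≤ p'.1 ∧ p'.1 ≤ max p.1 a.1 := by omega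
      have hab2x : a.1 ≠ b2.1 := by omega
      have hab2y : a.2 ≠ b2.2 := fun h => hab2x (congrArg Prod.fst (hY a haP b2 hb2P h))
      rcases hab2y.lt_or_gt with hlt | hgt
      · by_cases hb2bet : min p.1 a.1 ≤ b2.1 ∧ b2.1 ≤ max p.1 a.1
        · exact no_wit hNa hb2P (ne_of_snd_ne (by omega)) (ne_of_snd_ne (by omega))
            (by omega) (by omega) (by omega) (by omega)
        · exact no_wit hNb2 hp (ne_of_snd_ne (by omega)) (ne_of_snd_ne (by omega))
            (by omega) (by omega) (by omega) (by omega)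
      · have hNp'a : ¬ PairSat (↑P : Set (ℤ × ℤ)) p' a := by
          rintro ⟨c, hcP, hc1, hc2, hcr1, hcr2, hcr3, hcr4⟩
          rw [Finset.mem_coe] at hcP
          rcases lt_trichotomy c.2 b.2 with h | h | h
          · exact no_wit hNa hcP (ne_of_snd_ne (by omega)) hc2
              (by omega) (by omega) (by omega) (by omega)
          · have := congrArg Prod.fst (hY c hcP b hbP h)
            omega
          · exact no_wit hNb hcP hc1 (ne_of_snd_ne (by omega))
              (by omega) (by omega) (by omega) (by omega)
        exact hbcons a (mem_funnel.2 ⟨haP, by omega, by omega, hNp'a⟩) ⟨by omega, hab⟩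
  · -- corner (p.1, a.2)
    rw [hP] at hs1 hs2
    rw [hA2] at hs3 hs4
    have hppx : p.1 ≠ p'.1 := by omega
    have hpbx : p.1 ≠ b.1 := by omega
    have hpp' : p'.2 < p.2 := by
      by_contra hc
      push_neg at hc
      have h1 : p ≠ p' := fun h => hppx (congrArg Prod.fst h)
      have h2 : p.2 ≠ p'.2 := fun h => h1 (hY p hp p' hp' h)
      exact no_wit hNb hp h1 (ne_of_snd_ne (by omega))
        (by omega) (by omega) (by omega) (by omega)
    have haout : a.1 < min b.1 p'.1 ∨ max b.1 p'.1 < a.1 := by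
      by_contra hc
      push_neg at hc
      exact no_wit hNb haP (ne_of_snd_ne (by omega)) (ne_of_snd_ne (by omega))
        (by omega) (by omega) (by omega) (by omega)
    by_cases hpbet : min p.1 a.1 ≤ p'.1 ∧ p'.1 ≤ max p.1 a.1
    · exact no_wit hNa hp' (ne_of_snd_ne (by omega)) (ne_of_snd_ne (by omega))
        (by omega) (by omega) (by omega) (by omega)
    · have hbbet : min p.1 a.1 ≤ b.1 ∧ b.1 ≤ max p.1 a.1 := by omega
      have hstep1 : a2.2 < b.2 := by
        by_contra hc
        push_neg at hc
        have hab2x : a2.1 ≠ b.1 := by omega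
        have hab2 : a2.2 ≠ b.2 := fun h => hab2x (congrArg Prod.fst (hY a2 ha2P b hbP h))
        by_cases ha2in : min b.1 p'.1 ≤ a2.1 ∧ a2.1 ≤ max b.1 p'.1
        · exact no_wit hNb ha2P (ne_of_snd_ne (by omega)) (ne_of_snd_ne hab2)
            (by omega) (by omega) (by omega) (by omega)
        · exact no_wit hNa2 hp' (ne_of_snd_ne (by omega)) (ne_of_snd_ne (by omega))
            (by omega) (by omega) (by omega) (by omega)
      have hNpb : ¬ PairSat (↑P : Set (ℤ × ℤ)) p b := by
        rintro ⟨c, hcP, hc1, hc2, hcr1, hcr2, hcr3, hcr4⟩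
        rw [Finset.mem_coe] at hcP
        rcases lt_trichotomy c.2 a.2 with h | h | h
        · exact no_wit hNb hcP (ne_of_snd_ne (by omega)) hc2
            (by omega) (by omega) (by omega) (by omega)
        · have := congrArg Prod.fst (hY c hcP a haP h)
          omega
        · exact no_wit hNa hcP hc1 (ne_of_snd_ne (by omega))
            (by omega) (by omega) (by omega) (by omega)
      exact hacons b (mem_funnel.2 ⟨hbP, by omega, by omega, hNpb⟩) ⟨hstep1, by omega⟩
  · -- corner is p itself
    rw [hP] at hs1 hs2
    rw [hP2] at hs3 hs4
    exact no_wit hNb hp (ne_of_snd_ne (by omega)) (ne_of_snd_ne (by omega))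
      (by omega) (by omega) (by omega) (by omega)

noncomputable def altRects (P : Finset (ℤ × ℤ)) : Finset ((ℤ × ℤ) × (ℤ × ℤ)) :=
  P.biUnion fun p =>
    ((((funnel P p) ×ˢ (funnel P p)).filter (fun qq =>
      qq.2.2 < qq.1.2 ∧
      (∀ r ∈ funnel P p, ¬ (qq.2.2 < r.2 ∧ r.2 < qq.1.2)) ∧
      ((qq.1.1 < p.1) ≠ (qq.2.1 < p.1)))).image (fun qq => (qq.1, p)))

lemma mem_altRects {P : Finset (ℤ × ℤ)} {r : (ℤ × ℤ) × (ℤ × ℤ)} :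
    r ∈ altRects P ↔ r.2 ∈ P ∧ ∃ q2, r.1 ∈ funnel P r.2 ∧ q2 ∈ funnel P r.2 ∧ q2.2 < r.1.2 ∧
      (∀ t ∈ funnel P r.2, ¬(q2.2 < t.2 ∧ t.2 < r.1.2)) ∧ ((r.1.1 < r.2.1) ≠ (q2.1 < r.2.1)) := by
  constructor
  · intro h
    simp only [altRects, Finset.mem_biUnion, Finset.mem_image, Finset.mem_filter,
      Finset.mem_product] at h
    obtain ⟨p, hpP, qq, ⟨⟨hq1, hq2⟩, hlt, hcons, hside⟩, rfl⟩ := h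
    exact ⟨hpP, qq.2, hq1, hq2, hlt, hcons, hside⟩
  · rintro ⟨h1, q2, h2, h3, h4, h5, h6⟩
    simp only [altRects, Finset.mem_biUnion, Finset.mem_image, Finset.mem_filter,
      Finset.mem_product]
    exact ⟨r.2, h1, (r.1, q2), ⟨⟨h2, h3⟩, h4, h5, h6⟩, by simp⟩

lemma card_altRects (P : Finset (ℤ × ℤ))
    (hY : ∀ p ∈ P, ∀ q ∈ P, p.2 = q.2 → p = q) :
    (altRects P).card = ∑ p ∈ P, funnelAlt P p := by
  rw [altRects, Finset.card_biUnion]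
  · refine Finset.sum_congr rfl fun p hp => ?_
    rw [Finset.card_image_of_injOn]
    · rfl
    · intro x hx y hy hxy
      simp only [Finset.mem_coe, Finset.mem_filter, Finset.mem_product] at hx hy
      obtain ⟨⟨hx1, hx2⟩, hxlt, hxcons, _⟩ := hx
      obtain ⟨⟨hy1, hy2⟩, hylt, hycons, _⟩ := hy
      have h1 : x.1 = y.1 := by simpa using hxy
      have h12 : x.1.2 = y.1.2 := by rw [h1]
      have e1 := hxcons y.2 hy2
      have e2 := hycons x.2 hx2
      have hyy : x.2.2 = y.2.2 := by omega
      have h2 : x.2 = y.2 := hY _ (mem_funnel.1 hx2).1 _ (mem_funnel.1 hy2).1 hyy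
      exact Prod.ext h1 h2
  · intro p hp q hq hpq
    simp only [Finset.disjoint_left, Finset.mem_image]
    rintro x ⟨u, hu, rfl⟩ ⟨v, hv, hx⟩
    simp only [Prod.mk.injEq] at hx
    exact hpq hx.2.symm

lemma unsat_altRects (P : Finset (ℤ × ℤ)) : UnsatFamily P (altRects P) := by
  intro r hr
  obtain ⟨hp, q2, h2, h3, h4, h5, h6⟩ := mem_altRects.1 hr
  obtain ⟨haP, hay, hax, hNa⟩ := mem_funnel.1 h2
  exact ⟨haP, hp, hay, fun h => hax h.symm, fun h => hNa (pairSat_symm h)⟩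

lemma indep_altRects (P : Finset (ℤ × ℤ))
    (hY : ∀ p ∈ P, ∀ q ∈ P, p.2 = q.2 → p = q) :
    IndepFamily (altRects P) := by
  intro r hr s hs _ g hg
  obtain ⟨hpP, a2, ha, ha2, haa2, hacons, haside⟩ := mem_altRects.1 hr
  obtain ⟨hp'P, b2, hb, hb2, hbb2, hbcons, hbside⟩ := mem_altRects.1 hs
  exact indep_key P hY hpP hp'P ha ha2 haa2 hacons haside hb hb2 hbb2 hbcons hbside hg

end FunnelProofAux

/-- The funnel bound is asymptotically dominated by the independent rectangle
bound: there is a universal constant `c > 0` such that for every finite `P`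
with pairwise distinct `y`-coordinates, the sum of the funnel alternation
counts is at most `c · IRB(P)`. -/
theorem funnel_le_independent_rectangles :
    ∃ c : ℝ, 0 < c ∧
      ∀ P : Finset (ℤ × ℤ),
        (∀ p ∈ P, ∀ q ∈ P, p.2 = q.2 → p = q) →
        ((∑ p ∈ P, funnelAlt P p : ℕ) : ℝ) ≤ c * (IRB P : ℝ) := by
  refine ⟨1, one_pos, fun P hY => ?_⟩
  rw [one_mul]
  have key : (∑ p ∈ P, funnelAlt P p) ≤ IRB P := by
    rw [← card_altRects P hY]
    apply le_csSup
    · refine ⟨(P ×ˢ P).card, ?_⟩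
      rintro k ⟨R, hU, _, rfl⟩
      exact Finset.card_le_card fun r hr => Finset.mem_product.2 ⟨(hU r hr).1, (hU r hr).2.1⟩
    · exact ⟨altRects P, unsat_altRects P, indep_altRects P hY, rfl⟩
  exact_mod_cast key
end

section
/- Let m : ℕ and x : Fin m → ℤ, and let G = {(x i, i) : i < m} ⊆ ℤ × ℤ (one point per row). Define sets Q_0 = ∅ and, for 0 ≤ i < m, Q_{i+1} = Q_i ∪ {(x i, i)} ∪ {(q.1, i) : q ∈ Q_i and the pair ((x i, i), q) is not arborally satisfied in Q_i ∪ {(x i, i)}}. Then Q_m is a finite arborally satisfied superset of G. (This is the geometric greedy algorithm, equivalent to Lucas's greedy-future BST; its output is always an arborally satisfied set.) -/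
open scoped Classical

/-- `P` is an arborally satisfied set. -/
def ArborallySatisfied (P : Set (ℤ × ℤ)) : Prop :=
  ∀ a ∈ P, ∀ b ∈ P, a.1 ≠ b.1 → a.2 ≠ b.2 → PairSat P a b

lemma inRect_symm {a b c : ℤ × ℤ} (h : InRect a b c) : InRect b a c := by
  unfold InRect at *; omega

lemma pairSat_symm_s7 {P : Set (ℤ × ℤ)} {a b : ℤ × ℤ} (h : PairSat P a b) : PairSat P b a := by
  obtain ⟨c, hc, h1, h2, hr⟩ := h
  exact ⟨c, hc, h2, h1, inRect_symm hr⟩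

lemma step_sat (Qi : Finset (ℤ × ℤ)) (xi i : ℤ)
    (hy : ∀ p ∈ Qi, p.2 < i)
    (hsat : ArborallySatisfied (↑Qi : Set (ℤ × ℤ))) :
    ArborallySatisfied
      (↑(Qi ∪ {(xi, i)} ∪
        (Qi.filter (fun q => ¬ PairSat (↑(Qi ∪ {(xi, i)}) : Set (ℤ × ℤ)) (xi, i) q)).image
          (fun q => (q.1, i))) : Set (ℤ × ℤ)) := by
  set Qn : Finset (ℤ × ℤ) := Qi ∪ {(xi, i)} ∪
      (Qi.filter (fun q => ¬ PairSat (↑(Qi ∪ {(xi, i)}) : Set (ℤ × ℤ)) (xi, i) q)).image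
        (fun q => (q.1, i)) with hQn
  have hmem : ∀ p : ℤ × ℤ, p ∈ Qn ↔
      (p ∈ Qi ∨ p = (xi, i) ∨
        ∃ q ∈ Qi, ¬ PairSat (↑(Qi ∪ {(xi, i)}) : Set (ℤ × ℤ)) (xi, i) q ∧ p = (q.1, i)) := by
    intro p
    simp only [hQn, Finset.mem_union, Finset.mem_image, Finset.mem_filter,
      Finset.mem_singleton, or_assoc]
    constructor
    · rintro (h | h | ⟨q, ⟨hq, hns⟩, rfl⟩)
      · exact Or.inl h
      · exact Or.inr (Or.inl h)
      · exact Or.inr (Or.inr ⟨q, hq, hns, rfl⟩)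
    · rintro (h | h | ⟨q, hq, hns, rfl⟩)
      · exact Or.inl h
      · exact Or.inr (Or.inl h)
      · exact Or.inr (Or.inr ⟨q, ⟨hq, hns⟩, rfl⟩)
  have hold : ∀ p ∈ Qi, p ∈ Qn := fun p hp => (hmem p).2 (Or.inl hp)
  have hpin : (xi, i) ∈ Qn := (hmem _).2 (Or.inr (Or.inl rfl))
  -- the case b = (xi, i)
  have hpcase : ∀ a ∈ Qi, a.1 ≠ xi → PairSat (↑Qn : Set (ℤ × ℤ)) a (xi, i) := by
    intro a ha hax
    have hay := hy a ha
    by_cases h : PairSat (↑(Qi ∪ {(xi, i)}) : Set (ℤ × ℤ)) (xi, i) a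
    · obtain ⟨c, hc, hc1, hc2, hcr⟩ := h
      have hcQ : c ∈ Qn := by
        rcases Finset.mem_union.1 (Finset.mem_coe.1 hc) with h' | h'
        · exact hold c h'
        · exact (hmem c).2 (Or.inr (Or.inl (Finset.mem_singleton.1 h')))
      exact ⟨c, Finset.mem_coe.2 hcQ, hc2, hc1, inRect_symm hcr⟩
    · have hnew : (a.1, i) ∈ Qn := (hmem _).2 (Or.inr (Or.inr ⟨a, ha, h, rfl⟩))
      refine ⟨(a.1, i), Finset.mem_coe.2 hnew, ?_, ?_, ?_⟩
      · intro h'; have := congrArg Prod.snd h'; simp at this; omega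
      · intro h'; have := congrArg Prod.fst h'; simp at this; exact hax this
      · unfold InRect; dsimp only; omega
  -- key lemma: a ∈ Qi, b new row
  have hkey : ∀ a ∈ Qi, ∀ b ∈ Qn, b.2 = i → a.1 ≠ b.1 →
      PairSat (↑Qn : Set (ℤ × ℤ)) a b := by
    intro a ha b hb hb2 hab
    have hay := hy a ha
    rcases (hmem b).1 hb with hbQ | rfl | ⟨q, hq, hnq, rfl⟩
    · exact absurd hb2 (by have := hy b hbQ; omega)
    · exact hpcase a ha hab
    · simp only at hab hb2 ⊢
      have hqy := hy q hq
      by_cases h1 : a.2 ≤ q.2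
      · -- q itself is a witness
        refine ⟨q, Finset.mem_coe.2 (hold q hq), ?_, ?_, ?_⟩
        · intro h'; exact hab (congrArg Prod.fst h').symm
        · intro h'; have := congrArg Prod.snd h'; simp at this; omega
        · unfold InRect; dsimp only; omega
      · push_neg at h1
        by_cases h2a : min xi q.1 ≤ a.1 ∧ a.1 ≤ max xi q.1
        · exfalso
          apply hnq
          refine ⟨a, ?_, ?_, ?_, ?_⟩
          · exact Finset.mem_coe.2 (Finset.mem_union.2 (Or.inl ha))
          · intro h'; have := congrArg Prod.snd h'; simp at this; omega
          · intro h'; exact hab (congrArg Prod.fst h')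
          · unfold InRect; dsimp only; omega
        · by_cases hxiw : xi = q.1
          · have : ((q.1 : ℤ), i) = (xi, i) := by rw [hxiw]
            rw [this]
            exact hpcase a ha (by omega)
          · by_cases hbet : min a.1 q.1 < xi ∧ xi < max a.1 q.1
            · -- (xi, i) is a witness
              refine ⟨(xi, i), Finset.mem_coe.2 hpin, ?_, ?_, ?_⟩
              · intro h'; have := congrArg Prod.snd h'; simp at this; omega
              · intro h'; have := congrArg Prod.fst h'; simp at this; omega
              · unfold InRect; dsimp only; omega
            · -- hard case: q.1 strictly between a.1 and xi
              by_cases hA : ∃ c ∈ Qi, c ≠ a ∧ min a.1 q.1 ≤ c.1 ∧ c.1 ≤ max a.1 q.1 ∧ a.2 ≤ c.2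
              · obtain ⟨c, hc, hca, hc1, hc2, hc3⟩ := hA
                have hcy := hy c hc
                refine ⟨c, Finset.mem_coe.2 (hold c hc), hca, ?_, ?_⟩
                · intro h'; have := congrArg Prod.snd h'; simp at this; omega
                · unfold InRect; dsimp only; omega
              · push_neg at hA
                have hns : ¬ PairSat (↑(Qi ∪ {(xi, i)}) : Set (ℤ × ℤ)) (xi, i) a := by
                  rintro ⟨d, hd, hd1, hd2, hdr⟩
                  have hdQ : d ∈ Qi := by
                    rcases Finset.mem_union.1 (Finset.mem_coe.1 hd) with h' | h'
                    · exact h'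
                    · exact absurd (Finset.mem_singleton.1 h') hd1
                  have hdy := hy d hdQ
                  unfold InRect at hdr; simp at hdr
                  by_cases hdw : min a.1 q.1 ≤ d.1 ∧ d.1 ≤ max a.1 q.1
                  · exact absurd hdr.2.2.1 (by have := hA d hdQ hd2; omega)
                  · apply hnq
                    refine ⟨d, hd, hd1, ?_, ?_⟩
                    · intro h'; subst h'; omega
                    · unfold InRect; dsimp only; omega
                have hnew : (a.1, i) ∈ Qn := (hmem _).2 (Or.inr (Or.inr ⟨a, ha, hns, rfl⟩))
                refine ⟨(a.1, i), Finset.mem_coe.2 hnew, ?_, ?_, ?_⟩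
                · intro h'; have := congrArg Prod.snd h'; simp at this; omega
                · intro h'; have := congrArg Prod.fst h'; simp at this; omega
                · unfold InRect; dsimp only; omega
  -- main satisfaction
  intro a ha b hb hab1 hab2
  have ha' := (hmem a).1 (Finset.mem_coe.1 ha)
  have hb' := (hmem b).1 (Finset.mem_coe.1 hb)
  have haQ : a ∈ Qi ∨ a.2 = i := by
    rcases ha' with h | rfl | ⟨q, hq, _, rfl⟩
    · exact Or.inl h
    · exact Or.inr rfl
    · exact Or.inr rfl
  have hbQ : b ∈ Qi ∨ b.2 = i := by
    rcases hb' with h | rfl | ⟨q, hq, _, rfl⟩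
    · exact Or.inl h
    · exact Or.inr rfl
    · exact Or.inr rfl
  rcases haQ with haQ | ha2
  · rcases hbQ with hbQ | hb2
    · obtain ⟨c, hc, hc1, hc2, hcr⟩ := hsat a (Finset.mem_coe.2 haQ) b (Finset.mem_coe.2 hbQ) hab1 hab2
      exact ⟨c, Finset.mem_coe.2 (hold c (Finset.mem_coe.1 hc)), hc1, hc2, hcr⟩
    · exact hkey a haQ b (Finset.mem_coe.1 hb) hb2 hab1
  · rcases hbQ with hbQ | hb2
    · exact pairSat_symm_s7 (hkey b hbQ a (Finset.mem_coe.1 ha) ha2 (Ne.symm hab1))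
    · exact absurd (ha2.trans hb2.symm) hab2

/-- The geometric greedy algorithm (equivalent to Lucas's greedy-future BST):
processing the rows bottom to top, at step `i` we add the searched point
`(x i, i)` together with the point `(q.1, i)` for every previously present
point `q` whose pair with `(x i, i)` is not arborally satisfied. The final
point set `Q m` is an arborally satisfied superset of
`G = {(x i, i) : i < m}`. -/
theorem greedy_arborallySatisfied
    (m : ℕ) (x : Fin m → ℤ)
    (Q : ℕ → Finset (ℤ × ℤ))
    (hQ0 : Q 0 = ∅)
    (hQs : ∀ i : Fin m,
      Q ((i : ℕ) + 1) =
        Q i ∪ {(x i, ((i : ℕ) : ℤ))} ∪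
          ((Q i).filter (fun q =>
            ¬ PairSat (↑(Q i ∪ {(x i, ((i : ℕ) : ℤ))}) : Set (ℤ × ℤ))
              (x i, ((i : ℕ) : ℤ)) q)).image
            (fun q => (q.1, ((i : ℕ) : ℤ)))) :
    (Finset.univ : Finset (Fin m)).image (fun i => (x i, ((i : ℕ) : ℤ))) ⊆ Q m ∧
    ArborallySatisfied (↑(Q m) : Set (ℤ × ℤ)) := by
  have main : ∀ i, i ≤ m →
      (∀ p ∈ Q i, p.2 < (i : ℤ)) ∧ ArborallySatisfied (↑(Q i) : Set (ℤ × ℤ)) ∧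
        ∀ j : Fin m, (j : ℕ) < i → (x j, ((j : ℕ) : ℤ)) ∈ Q i := by
    intro i
    induction i with
    | zero =>
      intro _
      refine ⟨?_, ?_, ?_⟩ <;> simp [hQ0, ArborallySatisfied]
    | succ n ih =>
      intro hn1
      have hn : n < m := hn1
      obtain ⟨ihy, ihsat, ihG⟩ := ih (Nat.le_of_succ_le hn1)
      set xn : ℤ := x ⟨n, hn⟩ with hxn
      have heq : Q (n + 1) =
          Q n ∪ {(xn, (n : ℤ))} ∪
            ((Q n).filter (fun q =>
              ¬ PairSat (↑(Q n ∪ {(xn, (n : ℤ))}) : Set (ℤ × ℤ)) (xn, (n : ℤ)) q)).image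
              (fun q => (q.1, (n : ℤ))) := hQs ⟨n, hn⟩
      refine ⟨?_, ?_, ?_⟩
      · intro p hp
        rw [heq] at hp
        simp only [Finset.mem_union, Finset.mem_image, Finset.mem_filter,
          Finset.mem_singleton] at hp
        push_cast
        rcases hp with (hp | hp) | ⟨q, ⟨hq, _⟩, hq2⟩
        · have := ihy p hp; omega
        · rw [hp]; simp
        · rw [← hq2]; simp
      · rw [heq]
        exact step_sat (Q n) xn (n : ℤ) ihy ihsat
      · intro j hj
        rw [heq]
        rcases Nat.lt_succ_iff_lt_or_eq.1 hj with hj' | hj'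
        · exact Finset.mem_union.2 (Or.inl (Finset.mem_union.2 (Or.inl (ihG j hj'))))
        · have : j = ⟨n, hn⟩ := Fin.ext hj'
          subst this
          exact Finset.mem_union.2 (Or.inl (Finset.mem_union.2 (Or.inr (by simp [hxn]))))
  obtain ⟨_, hsat, hG⟩ := main m le_rfl
  constructor
  · intro p hp
    simp only [Finset.mem_image, Finset.mem_univ, true_and] at hp
    obtain ⟨j, _, rfl⟩ := hp
    exact hG j j.isLt
  · exact hsat
end

section
/- (Randomized weighted majority / multiplicative weights regret bound, in the scaled form stated in the paper.) Let η ≥ 2 be a number of experts, Z a type of events, ρ > 0, and M : Fin η → Z → ℝ a penalty function with 0 ≤ M a z ≤ ρ for all a and z. For every ε with 0 < ε ≤ 1/2 there exists an online randomized strategy σ : List Z → PMF (Fin η) (the distribution chosen before the k-th event depends only on the first k−1 events) such that for every T : ℕ and every event sequence z : Fin T → Z, the total expected penalty satisfies ∑_{k<T} E_{a ∼ σ [z_0, …, z_{k−1}]} [M a (z k)] ≤ (ρ · ln η) / ε + (1 + ε) · min_{a : Fin η} ∑_{k<T} M a (z k). -/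
/-!
Hedge with `β = 1 - ε`: expert `a` carries the weight `β ^ (L_a / ρ)`, where `L_a` is its
penalty so far, and the strategy plays the normalized weights. By Bernoulli's inequality a round
with expected scaled penalty `c` multiplies the total weight `Φ` by at most
`1 - (1 - β) c ≤ exp (-(1 - β) c)`, so after `T` rounds `Φ ≤ η exp (-ε C)`, `C` the total
expected scaled penalty. As `Φ` dominates the weight of every single expert, taking logarithms
gives `ε C ≤ log η - log (1 - ε) L_a / ρ`, and `-log (1 - ε) ≤ ε + ε²` for `ε ≤ 1/2`.
-/

open Finset Real

noncomputable section

namespace Hedge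

variable {ι Z : Type*}

def cumLoss (m : ι → Z → ℝ) (l : List Z) (a : ι) : ℝ := (l.map (m a)).sum

def weight (β : ℝ) (m : ι → Z → ℝ) (l : List Z) (a : ι) : ℝ := β ^ cumLoss m l a

section normalize

variable [Fintype ι] [Nonempty ι] {w : ι → ℝ}

def normalizedPMF (w : ι → ℝ) (hw : ∀ a, 0 < w a) : PMF ι :=
  PMF.ofFintype (fun a => ENNReal.ofReal (w a / ∑ b, w b)) <| by
    have hsum : 0 < ∑ b, w b := Finset.sum_pos (fun b _ => hw b) univ_nonempty
    rw [← ENNReal.ofReal_sum_of_nonneg fun a _ => div_nonneg (hw a).le hsum.le,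
      ← Finset.sum_div, div_self hsum.ne', ENNReal.ofReal_one]

theorem normalizedPMF_toReal (hw : ∀ a, 0 < w a) (a : ι) :
    (normalizedPMF w hw a).toReal = w a / ∑ b, w b :=
  ENNReal.toReal_ofReal <|
    div_nonneg (hw a).le (Finset.sum_nonneg fun b _ => (hw b).le)

theorem sum_mul_eq_sum_mul_sum_normalizedPMF (hw : ∀ a, 0 < w a) (f : ι → ℝ) :
    ∑ a, w a * f a = (∑ b, w b) * ∑ a, (normalizedPMF w hw a).toReal * f a := by
  have hsum : 0 < ∑ b, w b := Finset.sum_pos (fun b _ => hw b) univ_nonempty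
  simp only [normalizedPMF_toReal, Finset.mul_sum]
  refine Finset.sum_congr rfl fun a _ => ?_
  field_simp

end normalize

variable {β : ℝ} {m : ι → Z → ℝ}

theorem cumLoss_concat (m : ι → Z → ℝ) (l : List Z) (z : Z) (a : ι) :
    cumLoss m (l.concat z) a = cumLoss m l a + m a z := by
  simp [cumLoss]

theorem cumLoss_ofFn (m : ι → Z → ℝ) {T : ℕ} (z : Fin T → Z) (a : ι) :
    cumLoss m (List.ofFn z) a = ∑ k, m a (z k) := by
  simp [cumLoss, List.map_ofFn, List.sum_ofFn]

theorem weight_pos (hβ : 0 < β) (l : List Z) (a : ι) : 0 < weight β m l a :=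
  rpow_pos_of_pos hβ _

variable [Fintype ι]

def potential (β : ℝ) (m : ι → Z → ℝ) (l : List Z) : ℝ := ∑ a, weight β m l a

theorem weight_le_potential (hβ : 0 < β) (l : List Z) (a : ι) :
    weight β m l a ≤ potential β m l :=
  Finset.single_le_sum (fun b _ => (weight_pos hβ l b).le) (mem_univ a)

theorem potential_nil (β : ℝ) (m : ι → Z → ℝ) :
    potential β m [] = Fintype.card ι := by
  simp [potential, weight, cumLoss]

def strategy [Nonempty ι] (hβ : 0 < β) (m : ι → Z → ℝ) (l : List Z) : PMF ι :=
  normalizedPMF (weight β m l) (weight_pos hβ l)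

theorem potential_concat_le [Nonempty ι] (hβ : 0 < β)
    (hm : ∀ a z, 0 ≤ m a z ∧ m a z ≤ 1) (l : List Z) (z : Z) :
    potential β m (l.concat z) ≤ potential β m l *
      exp (-((1 - β) * ∑ a, (strategy hβ m l a).toReal * m a z)) := by
  set c := ∑ a, (strategy hβ m l a).toReal * m a z
  have hbernoulli : ∀ a, β ^ m a z ≤ 1 - (1 - β) * m a z := fun a => by
    have h := rpow_one_add_le_one_add_mul_self (s := β - 1) (by linarith) (hm a z).1 (hm a z).2
    rw [add_sub_cancel] at h
    linarith
  calc potential β m (l.concat z)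
      = ∑ a, weight β m l a * β ^ m a z := by
        simp only [potential, weight, cumLoss_concat, rpow_add hβ]
    _ ≤ ∑ a, weight β m l a * (1 - (1 - β) * m a z) :=
        Finset.sum_le_sum fun a _ => mul_le_mul_of_nonneg_left (hbernoulli a) (weight_pos hβ l a).le
    _ = potential β m l - (1 - β) * ∑ a, weight β m l a * m a z := by
        simp only [potential, Finset.mul_sum, ← Finset.sum_sub_distrib]
        exact Finset.sum_congr rfl fun a _ => by ring
    _ = potential β m l * (1 - (1 - β) * c) := by
        rw [sum_mul_eq_sum_mul_sum_normalizedPMF (weight_pos hβ l)]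
        simp only [potential, c, strategy]
        ring
    _ ≤ potential β m l * exp (-((1 - β) * c)) := by
        gcongr
        · exact (Finset.sum_pos (fun a _ => weight_pos hβ l a) univ_nonempty).le
        · linarith [add_one_le_exp (-((1 - β) * c))]

theorem potential_ofFn_le [Nonempty ι] (hβ : 0 < β)
    (hm : ∀ a z, 0 ≤ m a z ∧ m a z ≤ 1) {T : ℕ} (z : Fin T → Z) :
    potential β m (List.ofFn z) ≤ Fintype.card ι * exp (-((1 - β) *
      ∑ k : Fin T, ∑ a, (strategy hβ m (List.ofFn fun j : Fin k =>
        z ⟨j, lt_trans j.isLt k.isLt⟩) a).toReal * m a (z k))) := by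
  induction T with
  | zero => simp [potential_nil]
  | succ T ih =>
    rw [List.ofFn_succ', Fin.sum_univ_castSucc]
    refine (potential_concat_le hβ hm _ _).trans ?_
    calc _ ≤ _ := mul_le_mul_of_nonneg_right (ih fun k => z k.castSucc) (exp_pos _).le
      _ = _ := by rw [mul_assoc, ← exp_add, ← neg_add, ← mul_add]; rfl

theorem regret_le [Nonempty ι] (hβ : 0 < β)
    (hm : ∀ a z, 0 ≤ m a z ∧ m a z ≤ 1) {T : ℕ} (z : Fin T → Z) (a : ι) :
    (1 - β) * ∑ k : Fin T, ∑ a, (strategy hβ m (List.ofFn fun j : Fin k =>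
        z ⟨j, lt_trans j.isLt k.isLt⟩) a).toReal * m a (z k)
      ≤ log (Fintype.card ι) - log β * ∑ k, m a (z k) := by
  set C := ∑ k : Fin T, ∑ a, (strategy hβ m (List.ofFn fun j : Fin k =>
    z ⟨j, lt_trans j.isLt k.isLt⟩) a).toReal * m a (z k)
  have hbound : β ^ ∑ k, m a (z k) ≤ Fintype.card ι * exp (-((1 - β) * C)) := by
    rw [← cumLoss_ofFn]
    exact (weight_le_potential hβ _ a).trans (potential_ofFn_le hβ hm z)
  have hlog := log_le_log (rpow_pos_of_pos hβ _) hbound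
  rw [log_rpow hβ, log_mul (by positivity) (exp_pos _).ne', log_exp] at hlog
  linarith

end Hedge

theorem neg_log_one_sub_le {ε : ℝ} (hε : 0 ≤ ε) (hε' : ε ≤ 1 / 2) :
    -log (1 - ε) ≤ ε + ε ^ 2 := by
  have hexp : exp (-(ε + ε ^ 2)) ≤ 1 - ε := by
    rw [exp_neg, inv_le_iff_one_le_mul₀ (exp_pos _)]
    nlinarith [quadratic_le_exp_of_nonneg (by positivity : 0 ≤ ε + ε ^ 2)]
  have := log_le_log (exp_pos _) hexp
  rw [log_exp] at this
  linarith

/-- Randomized weighted majority / multiplicative weights regret bound.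
There is an online randomized strategy `σ` (the distribution on experts chosen
before the `k`-th event depends only on the first `k−1` events) whose total
expected penalty on any event sequence is at most
`ρ ln η / ε + (1+ε) ·` (the total penalty of the best single expert). -/
theorem weighted_majority_regret
    (η : ℕ) (hη : 2 ≤ η) (Z : Type) (ρ : ℝ) (hρ : 0 < ρ)
    (M : Fin η → Z → ℝ) (hM : ∀ a z, 0 ≤ M a z ∧ M a z ≤ ρ)
    (ε : ℝ) (hε : 0 < ε) (hε' : ε ≤ 1 / 2) :
    ∃ σ : List Z → PMF (Fin η),
      ∀ (T : ℕ) (z : Fin T → Z),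
        (∑ k : Fin T, ∑ a : Fin η,
            ((σ (List.ofFn fun j : Fin (k : ℕ) =>
                z ⟨(j : ℕ), lt_trans j.isLt k.isLt⟩)) a).toReal * M a (z k))
          ≤ ρ * Real.log η / ε +
            (1 + ε) * ⨅ a : Fin η, ∑ k : Fin T, M a (z k) := by
  have : Nonempty (Fin η) := ⟨⟨0, by omega⟩⟩
  have hβ : 0 < 1 - ε := by linarith
  have hm : ∀ a z, 0 ≤ M a z / ρ ∧ M a z / ρ ≤ 1 := fun a z =>
    ⟨div_nonneg (hM a z).1 hρ.le, (div_le_one hρ).2 (hM a z).2⟩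
  refine ⟨Hedge.strategy hβ fun a z => M a z / ρ, fun T z => ?_⟩
  obtain ⟨a, ha⟩ := exists_eq_ciInf_of_finite (f := fun a => ∑ k : Fin T, M a (z k))
  have hregret := Hedge.regret_le hβ hm z a
  simp only [sub_sub_cancel, Fintype.card_fin, mul_div, ← Finset.sum_div] at hregret
  rw [div_le_iff₀ hρ, sub_mul, div_mul_cancel₀ _ hρ.ne'] at hregret
  have hloss : 0 ≤ ∑ k : Fin T, M a (z k) := Finset.sum_nonneg fun k _ => (hM a (z k)).1
  have hlog := mul_le_mul_of_nonneg_right (neg_log_one_sub_le hε.le hε') hloss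
  rw [← ha, div_add' _ _ _ hε.ne', le_div_iff₀ hε]
  linarith
end
end

section
/- (Multiplicative-weights potential lemma.) Let η ≥ 1, Z a type, M : Fin η → Z → ℝ with 0 ≤ M a z ≤ 1 for all a, z, and let 0 < ε < 1. For an event sequence z : Fin T → Z define weights w_a^{(0)} = 1 and w_a^{(k+1)} = w_a^{(k)} · (1−ε)^{M a (z k)}, and let W_k = ∑_{a} w_a^{(k)} and F_k = (∑_a w_a^{(k)} · M a (z k)) / W_k (the weighted average loss at step k, assuming W_k > 0). Then: (i) W_T ≥ (1−ε)^{min_a ∑_{k<T} M a (z k)}, and (ii) W_T ≤ η · ∏_{k<T} (1 − ε · F_k). -/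
/-!
Every weight is a geometric function of its expert's cumulative loss,
`w a T = (1 - ε) ^ ∑ k, M a (z k)`, so the total weight dominates the weight of the best expert,
which is (i). For (ii), the pointwise bound `(1 - ε) ^ x ≤ 1 - ε x` on `[0, 1]` shows that round `k`
multiplies the total weight by at most `1 - ε F k`; telescoping from `W 0 = η` gives the bound.
-/

open Finset

section Telescoping

variable {R : Type*} {T : ℕ}

theorem eq_mul_prod_of_forall_succ_eq [CommMonoid R] (x : ℕ → R) (r : Fin T → R)
    (h : ∀ k : Fin T, x (k + 1) = x k * r k) : x T = x 0 * ∏ k, r k := by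
  induction T with
  | zero => simp
  | succ n ih =>
    rw [Fin.prod_univ_castSucc, ← mul_assoc, ← ih (fun k => r k.castSucc) fun k => h k.castSucc]
    exact h (Fin.last n)

theorem le_mul_prod_of_forall_succ_le [CommSemiring R] [PartialOrder R] [IsOrderedRing R]
    (x : ℕ → R) (c : Fin T → R) (hc : ∀ k, 0 ≤ c k) (h : ∀ k : Fin T, x (k + 1) ≤ x k * c k) :
    x T ≤ x 0 * ∏ k, c k := by
  induction T with
  | zero => simp
  | succ n ih =>
    rw [Fin.prod_univ_castSucc, ← mul_assoc]
    calc x (n + 1) ≤ x n * c (Fin.last n) := h (Fin.last n)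
      _ ≤ _ := mul_le_mul_of_nonneg_right
        (ih (fun k => c k.castSucc) (fun k => hc _) fun k => h k.castSucc) (hc _)

theorem nonneg_of_forall_succ_eq_mul [Semiring R] [PartialOrder R] [IsOrderedRing R]
    (x : ℕ → R) (r : Fin T → R) (h₀ : 0 ≤ x 0) (hr : ∀ k, 0 ≤ r k)
    (h : ∀ k : Fin T, x (k + 1) = x k * r k) : ∀ n ≤ T, 0 ≤ x n := by
  intro n hn
  induction n with
  | zero => exact h₀
  | succ n ih =>
    rw [show x (n + 1) = _ from h ⟨n, hn⟩]
    exact mul_nonneg (ih (by omega)) (hr _)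

end Telescoping

theorem Real.one_sub_rpow_le_one_sub_mul {ε x : ℝ} (hε : ε ≤ 1) (hx₀ : 0 ≤ x) (hx₁ : x ≤ 1) :
    (1 - ε) ^ x ≤ 1 - ε * x := by
  simpa [sub_eq_add_neg, mul_comm] using
    rpow_one_add_le_one_add_mul_self (s := -ε) (by linarith) hx₀ hx₁

theorem Real.rpow_iInf_le_sum_rpow {ι : Type*} [Fintype ι] [Nonempty ι] {b : ℝ} (hb : 0 ≤ b)
    (S : ι → ℝ) : b ^ (⨅ a, S a) ≤ ∑ a, b ^ S a := by
  obtain ⟨a₀, ha₀⟩ := exists_eq_ciInf_of_finite (f := S)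
  rw [← ha₀]
  exact single_le_sum (fun a _ => rpow_nonneg hb (S a)) (mem_univ a₀)

section WeightedAverage

variable {ι : Type*} [Fintype ι] {v m : ι → ℝ}

theorem sum_mul_div_sum_mem_Icc (hv : ∀ a, 0 ≤ v a) (hm : ∀ a, m a ∈ Set.Icc (0 : ℝ) 1) :
    (∑ a, v a * m a) / ∑ a, v a ∈ Set.Icc (0 : ℝ) 1 := by
  have hsum : 0 ≤ ∑ a, v a := sum_nonneg fun a _ => hv a
  have hle : ∑ a, v a * m a ≤ ∑ a, v a :=
    sum_le_sum fun a _ => mul_le_of_le_one_right (hv a) (hm a).2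
  exact ⟨div_nonneg (sum_nonneg fun a _ => mul_nonneg (hv a) (hm a).1) hsum,
    div_le_one_of_le₀ hle hsum⟩

theorem sum_mul_rpow_le_sum_mul_one_sub {ε : ℝ} (hv : ∀ a, 0 ≤ v a)
    (hm : ∀ a, m a ∈ Set.Icc (0 : ℝ) 1) (hε : ε ≤ 1) :
    ∑ a, v a * (1 - ε) ^ m a ≤ (∑ a, v a) * (1 - ε * ((∑ a, v a * m a) / ∑ a, v a)) := by
  have hcancel : (∑ a, v a) * ((∑ a, v a * m a) / ∑ a, v a) = ∑ a, v a * m a :=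
    mul_div_cancel_of_imp' fun h => by
      rw [sum_eq_zero_iff_of_nonneg fun a _ => hv a] at h
      simp [h]
  calc ∑ a, v a * (1 - ε) ^ m a ≤ ∑ a, v a * (1 - ε * m a) :=
        sum_le_sum fun a _ => mul_le_mul_of_nonneg_left
          (Real.one_sub_rpow_le_one_sub_mul hε (hm a).1 (hm a).2) (hv a)
    _ = (∑ a, v a) - ε * ∑ a, v a * m a := by
        simp only [mul_sub, mul_one, sum_sub_distrib, mul_sum, mul_left_comm ε]
    _ = _ := by rw [mul_sub, mul_one, mul_left_comm, hcancel]

end WeightedAverage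

theorem multiplicative_weights_potential_general
    (η : ℕ) (hη : 1 ≤ η) (Z : Type)
    (M : Fin η → Z → ℝ) (hM : ∀ a z, 0 ≤ M a z ∧ M a z ≤ 1)
    (ε : ℝ) (hε' : ε < 1)
    (T : ℕ) (z : Fin T → Z)
    (w : Fin η → ℕ → ℝ)
    (hw0 : ∀ a, w a 0 = 1)
    (hws : ∀ (a : Fin η) (k : Fin T),
      w a ((k : ℕ) + 1) = w a k * (1 - ε) ^ (M a (z k)))
    (W : ℕ → ℝ) (hW : ∀ k, W k = ∑ a : Fin η, w a k)
    (F : Fin T → ℝ)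
    (hF : ∀ k : Fin T, F k = (∑ a : Fin η, w a k * M a (z k)) / W k) :
    (1 - ε) ^ (⨅ a : Fin η, ∑ k : Fin T, M a (z k)) ≤ W T ∧
    W T ≤ (η : ℝ) * ∏ k : Fin T, (1 - ε * F k) := by
  have hb : 0 < 1 - ε := by linarith
  have hw_nonneg (a : Fin η) : ∀ n ≤ T, 0 ≤ w a n :=
    nonneg_of_forall_succ_eq_mul (w a) _ (by simp [hw0]) (fun _ => (Real.rpow_pos_of_pos hb _).le)
      (hws a)
  have hwT (a : Fin η) : w a T = (1 - ε) ^ ∑ k, M a (z k) := by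
    rw [eq_mul_prod_of_forall_succ_eq (w a) _ (hws a), hw0, one_mul, Real.rpow_sum_of_pos hb]
  have hF_mem (k : Fin T) : F k ∈ Set.Icc (0 : ℝ) 1 := by
    rw [hF, hW]
    exact sum_mul_div_sum_mem_Icc (fun a => hw_nonneg a k k.is_lt.le) fun a => hM a (z k)
  have hfactor (k : Fin T) : 0 ≤ 1 - ε * F k := by
    nlinarith [mul_nonneg hb.le (hF_mem k).1, (hF_mem k).2]
  have hW_step (k : Fin T) : W (k + 1) ≤ W k * (1 - ε * F k) := by
    simp only [hW, hF, hws]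
    exact sum_mul_rpow_le_sum_mul_one_sub (fun a => hw_nonneg a k k.is_lt.le) (fun a => hM a (z k))
      hε'.le
  refine ⟨?_, ?_⟩
  · have : Nonempty (Fin η) := ⟨⟨0, hη⟩⟩
    simpa only [hW, hwT] using Real.rpow_iInf_le_sum_rpow hb.le fun a => ∑ k, M a (z k)
  · simpa [hW 0, hw0] using le_mul_prod_of_forall_succ_le W _ hfactor hW_step

/-- Multiplicative-weights potential lemma. With weights
`w a 0 = 1`, `w a (k+1) = w a k * (1−ε)^(M a (z k))`, total weight
`W k = ∑ a, w a k` and weighted average loss `F k = (∑ a, w a k * M a (z k)) / W k`,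
we have `(1−ε)^(min_a ∑_{k<T} M a (z k)) ≤ W T` and
`W T ≤ η * ∏_{k<T} (1 − ε * F k)`. -/
theorem multiplicative_weights_potential
    (η : ℕ) (hη : 1 ≤ η) (Z : Type)
    (M : Fin η → Z → ℝ) (hM : ∀ a z, 0 ≤ M a z ∧ M a z ≤ 1)
    (ε : ℝ) (hε : 0 < ε) (hε' : ε < 1)
    (T : ℕ) (z : Fin T → Z)
    (w : Fin η → ℕ → ℝ)
    (hw0 : ∀ a, w a 0 = 1)
    (hws : ∀ (a : Fin η) (k : Fin T),
      w a ((k : ℕ) + 1) = w a k * (1 - ε) ^ (M a (z k)))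
    (W : ℕ → ℝ) (hW : ∀ k, W k = ∑ a : Fin η, w a k)
    (F : Fin T → ℝ)
    (hF : ∀ k : Fin T, F k = (∑ a : Fin η, w a k * M a (z k)) / W k) :
    (1 - ε) ^ (⨅ a : Fin η, ∑ k : Fin T, M a (z k)) ≤ W T ∧
    W T ≤ (η : ℝ) * ∏ k : Fin T, (1 - ε * F k) :=
  multiplicative_weights_potential_general η hη Z M hM ε hε' T z w hw0 hws W hW F hF
end

section
/- Every binary tree with n internal nodes can be transformed into the right spine (the unique binary tree with n internal nodes in which every left subtree is empty) by a sequence of at most n − 1 right rotations applied at subtrees. -/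
/-- Binary trees: a tree is either the empty leaf or a node with a left and a
right subtree. -/
inductive BinTree : Type
  | leaf : BinTree
  | node : BinTree → BinTree → BinTree

/-- The number of internal nodes of a binary tree. -/
def BinTree.size : BinTree → ℕ
  | .leaf => 0
  | .node l r => l.size + r.size + 1

/-- `RotR s t`: `t` is obtained from `s` by a single right rotation applied at
some subtree, i.e. by replacing a subtree of the form `node (node A B) C` by
`node A (node B C)`. -/
inductive RotR : BinTree → BinTree → Prop
  | root (A B C : BinTree) :
      RotR (.node (.node A B) C) (.node A (.node B C))
  | left {l l' : BinTree} (r : BinTree) :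
      RotR l l' → RotR (.node l r) (.node l' r)
  | right (l : BinTree) {r r' : BinTree} :
      RotR r r' → RotR (.node l r) (.node l r')

/-- The right spine with `n` internal nodes: every left subtree is empty. -/
def rightSpine : ℕ → BinTree
  | 0 => .leaf
  | n + 1 => .node .leaf (rightSpine n)

/-! A rotation at a node of the right spine moves one node of its left subtree onto the right
spine, so one rotation per node off the right spine suffices, and the root is always on it.
Concretely, `node l (rightSpine b)` becomes a right spine after `l.size` rotations: one at the
root, turning `node (node A B) S` into `node A (node B S)`, then recursively `B` and `A`.
Applying this bottom-up along the right spine of `t` straightens `t`. -/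

inductive Relation.PathOfLength {α : Type*} (r : α → α → Prop) : ℕ → α → α → Prop
  | refl (a : α) : PathOfLength r 0 a a
  | cons {k : ℕ} {a b c : α} : r a b → PathOfLength r k b c → PathOfLength r (k + 1) a c

namespace Relation.PathOfLength

variable {α β : Type*} {r : α → α → Prop} {k m : ℕ} {a b c : α}

theorem single (h : r a b) : PathOfLength r 1 a b := .cons h (.refl b)

theorem trans (hab : PathOfLength r k a b) (hbc : PathOfLength r m b c) :
    PathOfLength r (k + m) a c := by
  induction hab with
  | refl => simpa using hbc
  | @cons k a b d hab _ ih =>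
    rw [Nat.add_right_comm]
    exact .cons hab (ih hbc)

theorem map {s : β → β → Prop} (f : α → β) (hf : ∀ x y, r x y → s (f x) (f y))
    (h : PathOfLength r k a b) : PathOfLength s k (f a) (f b) := by
  induction h with
  | refl => exact .refl _
  | cons hab _ ih => exact .cons (hf _ _ hab) ih

theorem exists_seq (h : PathOfLength r k a b) :
    ∃ f : ℕ → α, f 0 = a ∧ f k = b ∧ ∀ i < k, r (f i) (f (i + 1)) := by
  induction h with
  | refl a => exact ⟨fun _ => a, rfl, rfl, by simp⟩
  | @cons k a b c hab _ ih =>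
    obtain ⟨f, hf0, hfk, hf⟩ := ih
    refine ⟨fun | 0 => a | i + 1 => f i, rfl, hfk, ?_⟩
    rintro (_ | i) hi
    · simpa [hf0] using hab
    · exact hf i (by omega)

end Relation.PathOfLength

open Relation

theorem rotR_path_node_rightSpine (l : BinTree) (b : ℕ) :
    PathOfLength RotR l.size (.node l (rightSpine b)) (rightSpine (l.size + b + 1)) := by
  induction l generalizing b with
  | leaf =>
    simpa [BinTree.size, rightSpine] using PathOfLength.refl (r := RotR) (rightSpine (b + 1))
  | node A B ihA ihB =>
    have hroot := PathOfLength.single (RotR.root A B (rightSpine b))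
    have hB := (ihB b).map (BinTree.node A) fun _ _ => RotR.right A
    have hA := ihA (B.size + b + 1)
    have hpath := (hroot.trans hB).trans hA
    convert hpath using 2 <;> simp only [BinTree.size] <;> omega

theorem exists_rotR_path_to_rightSpine (t : BinTree) :
    ∃ k ≤ t.size - 1, PathOfLength RotR k t (rightSpine t.size) := by
  induction t with
  | leaf => exact ⟨0, le_rfl, .refl _⟩
  | node l r _ ihr =>
    obtain ⟨k, hk, hr⟩ := ihr
    have hr' := hr.map (BinTree.node l) fun _ _ => RotR.right l
    refine ⟨k + l.size, ?_, ?_⟩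
    · simp only [BinTree.size]
      omega
    · convert hr'.trans (rotR_path_node_rightSpine l r.size) using 2
      simp only [BinTree.size]

/-- Every binary tree with `n` internal nodes can be transformed into the right
spine by a sequence of at most `n − 1` right rotations applied at subtrees. -/
theorem rotate_to_rightSpine (t : BinTree) :
    ∃ (k : ℕ) (f : ℕ → BinTree),
      k ≤ t.size - 1 ∧ f 0 = t ∧ f k = rightSpine t.size ∧
      ∀ i < k, RotR (f i) (f (i + 1)) := by
  obtain ⟨k, hk, hpath⟩ := exists_rotR_path_to_rightSpine t
  obtain ⟨f, hf0, hfk, hf⟩ := hpath.exists_seq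
  exact ⟨k, f, hk, hf0, hfk, hf⟩
end

section
/- For any two binary trees S and T each having n internal nodes, there is a sequence of at most 2(n − 1) rotations (each a right or left rotation applied at some subtree) transforming S into T. (This is the fact, used in the epoch-decomposition lemma, that any binary search tree on n keys can be converted into any other in O(n) rotations.) -/
namespace RotAux

/-- A chain of `k` `R`-steps. -/
inductive Seq (R : BinTree → BinTree → Prop) : ℕ → BinTree → BinTree → Prop
  | refl (a : BinTree) : Seq R 0 a a
  | cons {a b c : BinTree} {k : ℕ} : R a b → Seq R k b c → Seq R (k + 1) a c

theorem Seq.trans {R : BinTree → BinTree → Prop} {j k : ℕ} {a b c : BinTree}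
    (h1 : Seq R j a b) (h2 : Seq R k b c) : Seq R (j + k) a c := by
  induction h1 with
  | refl => simpa using h2
  | cons hab _ ih =>
    have := Seq.cons hab (ih h2)
    simpa [Nat.add_right_comm] using this

theorem Seq.snoc {R : BinTree → BinTree → Prop} {k : ℕ} {a b c : BinTree}
    (h1 : Seq R k a b) (h2 : R b c) : Seq R (k + 1) a c :=
  h1.trans (Seq.cons h2 (Seq.refl c))

theorem Seq.mono {R R' : BinTree → BinTree → Prop} (hR : ∀ x y, R x y → R' x y)
    {k : ℕ} {a b : BinTree} (h : Seq R k a b) : Seq R' k a b := by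
  induction h with
  | refl => exact Seq.refl _
  | cons hab _ ih => exact Seq.cons (hR _ _ hab) ih

theorem Seq.reverse {R : BinTree → BinTree → Prop} (hsymm : ∀ x y, R x y → R y x)
    {k : ℕ} {a b : BinTree} (h : Seq R k a b) : Seq R k b a := by
  induction h with
  | refl => exact Seq.refl _
  | cons hab _ ih => exact ih.snoc (hsymm _ _ hab)

theorem Seq.liftLeft {k : ℕ} {l l' : BinTree} (r : BinTree)
    (h : Seq RotR k l l') : Seq RotR k (.node l r) (.node l' r) := by
  induction h with
  | refl => exact Seq.refl _
  | cons hab _ ih => exact Seq.cons (RotR.left r hab) ih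

theorem Seq.liftRight {k : ℕ} (l : BinTree) {r r' : BinTree}
    (h : Seq RotR k r r') : Seq RotR k (.node l r) (.node l r') := by
  induction h with
  | refl => exact Seq.refl _
  | cons hab _ ih => exact Seq.cons (RotR.right l hab) ih

/-- Extract a function `f : ℕ → BinTree` from a chain. -/
theorem Seq.toFun {R : BinTree → BinTree → Prop} {k : ℕ} {a b : BinTree}
    (h : Seq R k a b) :
    ∃ f : ℕ → BinTree, f 0 = a ∧ f k = b ∧ ∀ i < k, R (f i) (f (i + 1)) := by
  induction h with
  | refl a => exact ⟨fun _ => a, rfl, rfl, fun i hi => absurd hi (Nat.not_lt_zero i)⟩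
  | @cons a b c k hab _ ih =>
    obtain ⟨g, hg0, hgk, hgs⟩ := ih
    refine ⟨fun i => if i = 0 then a else g (i - 1), by simp, by simp [hgk], ?_⟩
    intro i hi
    rcases Nat.eq_zero_or_pos i with h0 | h0
    · subst h0; simpa [hg0] using hab
    · have h1 : i ≠ 0 := Nat.pos_iff_ne_zero.mp h0
      have : i - 1 < k := by omega
      have := hgs (i - 1) this
      have he : i - 1 + 1 = i := by omega
      simpa [h1, he] using this

/-- The right spine with `n` nodes. -/
def spine : ℕ → BinTree
  | 0 => .leaf
  | n + 1 => .node .leaf (spine n)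

theorem spine_size (n : ℕ) : (spine n).size = n := by
  induction n with
  | zero => rfl
  | succ n ih => simp [spine, BinTree.size, ih]

/-- Length of the right spine of a tree. -/
def rsp : BinTree → ℕ
  | .leaf => 0
  | .node _ r => rsp r + 1

theorem rsp_le_size : ∀ s : BinTree, rsp s ≤ s.size
  | .leaf => le_refl _
  | .node l r => by
      have := rsp_le_size r
      simp only [rsp, BinTree.size]; omega

/-- Any tree can be rotated into the right spine using at most
`size − rsp` right rotations. -/
theorem toSpine (s : BinTree) :
    ∃ k, k + rsp s ≤ s.size ∧ Seq RotR k s (spine s.size) := by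
  match s with
  | .leaf => exact ⟨0, le_refl _, Seq.refl _⟩
  | .node .leaf r =>
    obtain ⟨k, hk, hs⟩ := toSpine r
    refine ⟨k, ?_, ?_⟩
    · simp only [rsp, BinTree.size] at *; omega
    · have : (BinTree.node BinTree.leaf r).size = r.size + 1 := by
        simp [BinTree.size]
      rw [this]
      exact hs.liftRight BinTree.leaf
  | .node (.node A B) C =>
    obtain ⟨k, hk, hs⟩ := toSpine (.node A (.node B C))
    have hsize : (BinTree.node A (BinTree.node B C)).size
        = (BinTree.node (BinTree.node A B) C).size := by
      simp [BinTree.size]; omega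
    refine ⟨k + 1, ?_, ?_⟩
    · have h1 := rsp_le_size (BinTree.node A (BinTree.node B C))
      simp only [rsp, BinTree.size] at *; omega
    · rw [← hsize]
      exact Seq.cons (RotR.root A B C) hs
termination_by 2 * s.size - rsp s
decreasing_by
  · have := rsp_le_size r
    simp only [rsp, BinTree.size]; omega
  · have := rsp_le_size (BinTree.node A (BinTree.node B C))
    simp only [rsp, BinTree.size] at *; omega

end RotAux

/-- Any binary tree with `n` internal nodes can be transformed into any other
binary tree with `n` internal nodes by a sequence of at most `2(n − 1)`
rotations, each a right or left rotation applied at some subtree. -/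
theorem rotation_distance_le (s t : BinTree) (h : s.size = t.size) :
    ∃ (k : ℕ) (f : ℕ → BinTree),
      k ≤ 2 * (s.size - 1) ∧ f 0 = s ∧ f k = t ∧
      ∀ i < k, RotR (f i) (f (i + 1)) ∨ RotR (f (i + 1)) (f i) := by
  classical
  set R : BinTree → BinTree → Prop := fun x y => RotR x y ∨ RotR y x with hR
  have hsymm : ∀ x y, R x y → R y x := fun x y h => h.symm
  obtain ⟨k1, hk1, hs1⟩ := RotAux.toSpine s
  obtain ⟨k2, hk2, hs2⟩ := RotAux.toSpine t
  have hs2' : RotAux.Seq R k2 (RotAux.spine s.size) t := by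
    rw [h]
    exact (hs2.mono (fun x y hxy => Or.inl hxy)).reverse hsymm
  have hchain : RotAux.Seq R (k1 + k2) s t :=
    (hs1.mono (fun x y hxy => Or.inl hxy)).trans hs2'
  obtain ⟨f, hf0, hfk, hfs⟩ := hchain.toFun
  refine ⟨k1 + k2, f, ?_, hf0, hfk, hfs⟩
  rcases s with _ | ⟨l, r⟩
  · -- s is a leaf, so t is a leaf and both chains are empty
    have : t.size = 0 := by simpa [BinTree.size] using h.symm
    have hrsps : RotAux.rsp BinTree.leaf = 0 := rfl
    simp only [BinTree.size] at hk1 h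
    omega
  · have h1 : 1 ≤ RotAux.rsp (BinTree.node l r) := by
      simp [RotAux.rsp]
    have h2 : 1 ≤ RotAux.rsp t := by
      rcases t with _ | ⟨a, b⟩
      · exfalso; simp [BinTree.size] at h
      · simp [RotAux.rsp]
    rw [h] at hk1
    simp only [BinTree.size] at *
    omega
end
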